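/- arXiv:2204.05365 — 4 statements merged into one kernel-verified Lean document; each statement's English description precedes it below -/
import Mathlib

section
/- Let n ∈ ℕ, L : Fin n → ℕ, and let b assign a real number b_K to every multi-index K ≤ L. Then for every t : Fin n → ℝ with 0 ≤ t i ≤ 1 for all i, the Bernstein-form polynomial B(t) = ∑_{K ≤ L} b_K · Ber_{K,L}(t) satisfies (min_{K ≤ L} b_K) ≤ B(t) ≤ (max_{K ≤ L} b_K), where min and max are taken over the (finite, nonempty) set of multi-indices K ≤ L. -/
/-- Multivariate Bernstein basis polynomial `Ber_{K,L}(t)`. -/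
noncomputable def Ber {n : ℕ} (L K : Fin n → ℕ) (t : Fin n → ℝ) : ℝ :=
  ∏ i, ((L i).choose (K i) : ℝ) * (t i) ^ (K i) * (1 - t i) ^ (L i - K i)

/-- The finite set of multi-indices `K ≤ L`. -/
def multiIdx {n : ℕ} (L : Fin n → ℕ) : Finset (Fin n → ℕ) :=
  Fintype.piFinset fun i => Finset.range (L i + 1)

lemma multiIdx_nonempty {n : ℕ} (L : Fin n → ℕ) : (multiIdx L).Nonempty :=
  ⟨fun _ => 0, by simp [multiIdx, Fintype.mem_piFinset]⟩

lemma Ber_nonneg {n : ℕ} (L K : Fin n → ℕ) (t : Fin n → ℝ)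
    (ht : ∀ i, 0 ≤ t i ∧ t i ≤ 1) : 0 ≤ Ber L K t := by
  apply Finset.prod_nonneg
  intro i _
  have h1 := (ht i).1
  have h2 := (ht i).2
  have h3 : 0 ≤ 1 - t i := by linarith
  exact mul_nonneg (mul_nonneg (Nat.cast_nonneg _) (pow_nonneg h1 _)) (pow_nonneg h3 _)

lemma Ber_sum {n : ℕ} (L : Fin n → ℕ) (t : Fin n → ℝ) :
    ∑ K ∈ multiIdx L, Ber L K t = 1 := by
  rw [multiIdx]
  unfold Ber
  rw [← Finset.prod_univ_sum (fun i => Finset.range (L i + 1))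
    (fun i k => ((L i).choose k : ℝ) * (t i) ^ k * (1 - t i) ^ (L i - k))]
  have : ∀ i : Fin n,
      ∑ k ∈ Finset.range (L i + 1),
        ((L i).choose k : ℝ) * (t i) ^ k * (1 - t i) ^ (L i - k) = 1 := by
    intro i
    have := add_pow (t i) (1 - t i) (L i)
    simp only [add_sub_cancel, one_pow] at this
    conv_rhs => rw [this]
    exact Finset.sum_congr rfl fun k _ => by ring
  simp [this]

/-- On the unit box, a polynomial in Bernstein form is bounded below (above) by the
minimum (maximum) of its Bernstein coefficients. -/
theorem bernstein_form_enclosure (n : ℕ) (L : Fin n → ℕ) (b : (Fin n → ℕ) → ℝ)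
    (t : Fin n → ℝ) (ht : ∀ i, 0 ≤ t i ∧ t i ≤ 1) :
    (multiIdx L).inf' (multiIdx_nonempty L) b ≤ ∑ K ∈ multiIdx L, b K * Ber L K t ∧
    ∑ K ∈ multiIdx L, b K * Ber L K t ≤ (multiIdx L).sup' (multiIdx_nonempty L) b := by
  constructor
  · calc (multiIdx L).inf' (multiIdx_nonempty L) b
        = ∑ K ∈ multiIdx L, (multiIdx L).inf' (multiIdx_nonempty L) b * Ber L K t := by
          rw [← Finset.mul_sum, Ber_sum, mul_one]
      _ ≤ ∑ K ∈ multiIdx L, b K * Ber L K t := by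
          apply Finset.sum_le_sum
          intro K hK
          exact mul_le_mul_of_nonneg_right (Finset.inf'_le b hK) (Ber_nonneg L K t ht)
  · calc ∑ K ∈ multiIdx L, b K * Ber L K t
        ≤ ∑ K ∈ multiIdx L, (multiIdx L).sup' (multiIdx_nonempty L) b * Ber L K t := by
          apply Finset.sum_le_sum
          intro K hK
          exact mul_le_mul_of_nonneg_right (Finset.le_sup' b hK) (Ber_nonneg L K t ht)
      _ = (multiIdx L).sup' (multiIdx_nonempty L) b := by
          rw [← Finset.mul_sum, Ber_sum, mul_one]
end

section
/- Let n ∈ ℕ, L : Fin n → ℕ, let a assign a real coefficient a_K to every multi-index K ≤ L, and let d, d̄ : Fin n → ℝ satisfy d i ≠ d̄ i for all i. Define the Bernstein coefficients b_K over the box [d, d̄] by the explicit formula b_K = ∑_{J ≤ K} (∏_i ((K i).choose (J i) : ℝ) / ((L i).choose (J i))) · (∏_i (d̄ i − d i)^(J i)) · ∑_{J ≤ I ≤ L} (∏_i ((I i).choose (J i) : ℝ)) · (∏_i (d i)^(I i − J i)) · a_I. Then for every x : Fin n → ℝ, with t i = (x i − d i)/(d̄ i − d i), one has ∑_{K ≤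 L} a_K · ∏_i (x i)^(K i) = ∑_{K ≤ L} b_K · Ber_{K,L}(t). -/
/-- The Bernstein coefficients `b_K` of the polynomial with power-basis coefficients `a`
over the box `[d, d̄]`. -/
noncomputable def bernCoeff {n : ℕ} (L : Fin n → ℕ) (a : (Fin n → ℕ) → ℝ)
    (d dbar : Fin n → ℝ) (K : Fin n → ℕ) : ℝ :=
  ∑ J ∈ multiIdx K,
    (∏ i, ((K i).choose (J i) : ℝ) / ((L i).choose (J i))) *
    (∏ i, (dbar i - d i) ^ (J i)) *
    ∑ I ∈ Fintype.piFinset (fun i => Finset.Icc (J i) (L i)),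
      (∏ i, ((I i).choose (J i) : ℝ)) * (∏ i, (d i) ^ (I i - J i)) * a I

open Finset

section OneVariable

variable {R : Type*} [CommRing R]

theorem pow_eq_sum_choose_mul_sub_pow (x d : R) (k : ℕ) :
    x ^ k = ∑ j ∈ range (k + 1), (k.choose j : R) * (x - d) ^ j * d ^ (k - j) := by
  conv_lhs => rw [← sub_add_cancel x d, add_pow]
  exact sum_congr rfl fun j _ => by ring

theorem choose_mul_pow_eq_sum_choose_mul_bernstein (L j : ℕ) (t : R) :
    (L.choose j : R) * t ^ j
      = ∑ k ∈ Icc j L, (k.choose j : R) * ((L.choose k : R) * t ^ k * (1 - t) ^ (L - k)) := by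
  rcases lt_or_ge L j with hLj | hjL
  · simp [Nat.choose_eq_zero_of_lt hLj, Icc_eq_empty_of_lt hLj]
  have hterm : ∀ m ∈ range (L - j + 1),
      ((j + m).choose j : R) * ((L.choose (j + m) : R) * t ^ (j + m) * (1 - t) ^ (L - (j + m)))
        = L.choose j * t ^ j * (t ^ m * (1 - t) ^ (L - j - m) * ((L - j).choose m : R)) := by
    intro m _
    have hchoose : (L.choose (j + m) : R) * (j + m).choose j
        = L.choose j * (L - j).choose m := by
      have h := Nat.choose_mul (n := L) (Nat.le_add_right j m)
      rw [Nat.add_sub_cancel_left] at h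
      rw [← Nat.cast_mul, ← Nat.cast_mul, h]
    rw [show L - (j + m) = L - j - m by omega, pow_add]
    linear_combination t ^ j * t ^ m * (1 - t) ^ (L - j - m) * hchoose
  have hIcc : Icc j L = (range (L - j + 1)).map (addLeftEmbedding j) := by
    rw [Nat.range_succ_eq_Icc_zero, map_add_left_Icc, add_zero, Nat.add_sub_cancel' hjL]
  rw [hIcc, sum_map]
  simp only [addLeftEmbedding_apply]
  rw [sum_congr rfl hterm, ← mul_sum, ← add_pow, add_sub_cancel, one_pow, mul_one]

end OneVariable

section MultiIndex

variable {n : ℕ}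

theorem mem_multiIdx {L K : Fin n → ℕ} : K ∈ multiIdx L ↔ ∀ i, K i ≤ L i := by
  simp only [multiIdx, Fintype.mem_piFinset, mem_range, Nat.lt_succ_iff]

theorem sum_multiIdx_sum_multiIdx_comm {M : Type*} [AddCommMonoid M] (L : Fin n → ℕ)
    (f : (Fin n → ℕ) → (Fin n → ℕ) → M) :
    ∑ K ∈ multiIdx L, ∑ J ∈ multiIdx K, f K J
      = ∑ J ∈ multiIdx L, ∑ K ∈ Fintype.piFinset (fun i => Icc (J i) (L i)), f K J :=
  sum_comm' fun K J => by
    simp only [mem_multiIdx, Fintype.mem_piFinset, mem_Icc]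
    exact ⟨fun ⟨hK, hJ⟩ => ⟨fun i => ⟨hJ i, hK i⟩, fun i => (hJ i).trans (hK i)⟩,
      fun ⟨hJK, _⟩ => ⟨fun i => (hJK i).2, fun i => (hJK i).1⟩⟩

theorem prod_pow_eq_sum_multiIdx {R : Type*} [CommRing R] (x d : Fin n → R) (K : Fin n → ℕ) :
    ∏ i, x i ^ K i
      = ∑ J ∈ multiIdx K, (∏ i, ((K i).choose (J i) : R)) * (∏ i, d i ^ (K i - J i)) *
          ∏ i, (x i - d i) ^ J i := by
  rw [prod_congr rfl fun i _ => pow_eq_sum_choose_mul_sub_pow (x i) (d i) (K i), prod_univ_sum]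
  refine sum_congr rfl fun J _ => ?_
  rw [← prod_mul_distrib, ← prod_mul_distrib]
  exact prod_congr rfl fun i _ => by ring

theorem sum_mul_prod_pow_eq_sum_mul_prod_sub_pow {R : Type*} [CommRing R]
    (L : Fin n → ℕ) (a : (Fin n → ℕ) → R) (x d : Fin n → R) :
    ∑ I ∈ multiIdx L, a I * ∏ i, x i ^ I i
      = ∑ J ∈ multiIdx L,
          (∑ I ∈ Fintype.piFinset (fun i => Icc (J i) (L i)),
            (∏ i, ((I i).choose (J i) : R)) * (∏ i, d i ^ (I i - J i)) * a I) *
          ∏ i, (x i - d i) ^ J i := by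
  simp_rw [prod_pow_eq_sum_multiIdx x d, mul_sum, sum_multiIdx_sum_multiIdx_comm, sum_mul]
  exact sum_congr rfl fun J _ => sum_congr rfl fun I _ => by ring

theorem prod_pow_eq_sum_Ber {L J : Fin n → ℕ} (hJ : ∀ i, J i ≤ L i) (t : Fin n → ℝ) :
    ∏ i, t i ^ J i
      = ∑ K ∈ Fintype.piFinset (fun i => Icc (J i) (L i)),
          (∏ i, ((K i).choose (J i) : ℝ) / (L i).choose (J i)) * Ber L K t := by
  have hcoord : ∀ i, t i ^ J i = ∑ k ∈ Icc (J i) (L i),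
      (k.choose (J i) : ℝ) / (L i).choose (J i) *
        ((L i).choose k * t i ^ k * (1 - t i) ^ (L i - k)) := by
    intro i
    have hchoose : ((L i).choose (J i) : ℝ) ≠ 0 := by exact_mod_cast (Nat.choose_pos (hJ i)).ne'
    simp_rw [div_mul_eq_mul_div, ← sum_div, ← choose_mul_pow_eq_sum_choose_mul_bernstein]
    field_simp
  rw [prod_congr rfl fun i _ => hcoord i, prod_univ_sum]
  exact sum_congr rfl fun K _ => by rw [Ber, ← prod_mul_distrib]

theorem sum_mul_prod_pow_eq_sum_mul_Ber (L : Fin n → ℕ) (e : (Fin n → ℕ) → ℝ)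
    (t : Fin n → ℝ) :
    ∑ J ∈ multiIdx L, e J * ∏ i, t i ^ J i
      = ∑ K ∈ multiIdx L,
          (∑ J ∈ multiIdx K, (∏ i, ((K i).choose (J i) : ℝ) / (L i).choose (J i)) * e J) *
          Ber L K t := by
  simp_rw [sum_mul, sum_multiIdx_sum_multiIdx_comm]
  refine sum_congr rfl fun J hJ => ?_
  rw [prod_pow_eq_sum_Ber (mem_multiIdx.mp hJ), mul_sum]
  exact sum_congr rfl fun K _ => by ring

end MultiIndex

/-- Over a nondegenerate box, the power-basis polynomial equals its Bernstein form with the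
Bernstein coefficients `bernCoeff`. -/
theorem bernstein_coefficient_representation (n : ℕ) (L : Fin n → ℕ)
    (a : (Fin n → ℕ) → ℝ) (d dbar : Fin n → ℝ) (hd : ∀ i, d i ≠ dbar i) (x : Fin n → ℝ) :
    ∑ K ∈ multiIdx L, a K * ∏ i, (x i) ^ (K i)
      = ∑ K ∈ multiIdx L,
          bernCoeff L a d dbar K * Ber L K (fun i => (x i - d i) / (dbar i - d i)) := by
  set t : Fin n → ℝ := fun i => (x i - d i) / (dbar i - d i)
  have hscale : ∀ J : Fin n → ℕ,
      ∏ i, (x i - d i) ^ J i = (∏ i, (dbar i - d i) ^ J i) * ∏ i, t i ^ J i := by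
    intro J
    rw [← prod_mul_distrib]
    refine prod_congr rfl fun i _ => ?_
    rw [← mul_pow, mul_div_cancel₀ _ (sub_ne_zero.mpr (hd i).symm)]
  rw [sum_mul_prod_pow_eq_sum_mul_prod_sub_pow L a x d]
  simp_rw [hscale, ← mul_assoc, mul_comm _ (∏ i, (dbar i - d i) ^ _)]
  rw [sum_mul_prod_pow_eq_sum_mul_Ber]
  simp_rw [bernCoeff, mul_assoc]
end

section
/- (Univariate Bernstein representation over an interval.) Let n ∈ ℕ, let a_0, …, a_n ∈ ℝ, and let d̲, d̄ ∈ ℝ with d̲ ≠ d̄. Define b_k = ∑_{j=0}^{k} ((k.choose j : ℝ)/(n.choose j)) · (d̄ − d̲)^j · ∑_{i=j}^{n} ((i.choose j : ℝ)) · d̲^(i−j) · a_i for 0 ≤ k ≤ n. Then for every x ∈ ℝ, with t = (x − d̲)/(d̄ − d̲), one has ∑_{i=0}^{n} a_i x^i = ∑_{k=0}^{n} b_k · (n.choose k : ℝ) · t^k · (1 − t)^(n−k). -/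
/-!
Writing `x = d̲ + (d̄ - d̲) t`, the binomial theorem re-expands `∑ aᵢ xⁱ` as `∑ⱼ Sⱼ (d̄ - d̲)ʲ tʲ`,
where `Sⱼ` is the inner sum in `bernCoeff1`. Expanding `tʲ (t + (1 - t))ⁿ⁻ʲ` writes each power
`tʲ`, `j ≤ n`, in the Bernstein basis of degree `n` as `∑ₖ (C(k,j) / C(n,j)) Ber_{k,n}(t)`;
exchanging the sums over `j ≤ k ≤ n` then produces the coefficients `b_k`.
-/

/-- Univariate Bernstein coefficients of the polynomial `∑ a_i x^i` over `[d̲, d̄]`. -/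
noncomputable def bernCoeff1 (n : ℕ) (a : ℕ → ℝ) (dlo dhi : ℝ) (k : ℕ) : ℝ :=
  ∑ j ∈ Finset.range (k + 1),
    ((k.choose j : ℝ) / (n.choose j : ℝ)) * (dhi - dlo) ^ j *
      ∑ i ∈ Finset.Icc j n, (i.choose j : ℝ) * dlo ^ (i - j) * a i

open Finset

theorem Finset.sum_range_sum_Icc_comm {M : Type*} [AddCommMonoid M] (n : ℕ) (f : ℕ → ℕ → M) :
    ∑ j ∈ range (n + 1), ∑ i ∈ Icc j n, f j i = ∑ i ∈ range (n + 1), ∑ j ∈ range (i + 1), f j i := by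
  simpa only [range_eq_Ico, Ico_add_one_right_eq_Icc] using sum_Ico_Ico_comm 0 (n + 1) f

theorem sum_mul_add_pow_eq_sum_taylor {R : Type*} [CommSemiring R] (n : ℕ) (a : ℕ → R) (c y : R) :
    ∑ i ∈ range (n + 1), a i * (c + y) ^ i
      = ∑ j ∈ range (n + 1), (∑ i ∈ Icc j n, (i.choose j : R) * c ^ (i - j) * a i) * y ^ j := by
  simp_rw [sum_mul, sum_range_sum_Icc_comm, add_comm c, add_pow, mul_sum]
  refine sum_congr rfl fun i _ => sum_congr rfl fun j _ => ?_
  ring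

theorem sum_Icc_choose_mul_bernstein {R : Type*} [CommRing R] (n j : ℕ) (t : R) :
    ∑ k ∈ Icc j n, (k.choose j : R) * ((n.choose k : R) * t ^ k * (1 - t) ^ (n - k))
      = n.choose j * t ^ j := by
  rcases lt_or_ge n j with hnj | hjn
  · simp [Nat.choose_eq_zero_of_lt hnj, Icc_eq_empty_of_lt hnj]
  have hterm : ∀ m ∈ range (n + 1 - j),
      ((j + m).choose j : R) * ((n.choose (j + m) : R) * t ^ (j + m) * (1 - t) ^ (n - (j + m)))
        = n.choose j * t ^ j * (t ^ m * (1 - t) ^ (n - j - m) * ((n - j).choose m : R)) := by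
    intro m _
    have hchoose : ((n.choose (j + m) * (j + m).choose j : ℕ) : R)
        = (n.choose j * (n - j).choose m : ℕ) := by
      rw [Nat.choose_mul (Nat.le_add_right j m), Nat.add_sub_cancel_left]
    push_cast at hchoose
    rw [Nat.sub_add_eq, pow_add]
    linear_combination t ^ j * t ^ m * (1 - t) ^ (n - j - m) * hchoose
  rw [← Ico_add_one_right_eq_Icc, sum_Ico_eq_sum_range, sum_congr rfl hterm, ← mul_sum,
    Nat.sub_add_comm hjn, ← add_pow, add_sub_cancel, one_pow, mul_one]

theorem pow_eq_sum_bernstein {K : Type*} [Field K] [CharZero K] {n j : ℕ} (hjn : j ≤ n) (t : K) :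
    t ^ j = ∑ k ∈ Icc j n,
      (k.choose j : K) / n.choose j * ((n.choose k : K) * t ^ k * (1 - t) ^ (n - k)) := by
  have hchoose : (n.choose j : K) ≠ 0 := Nat.cast_ne_zero.2 (Nat.choose_pos hjn).ne'
  simp_rw [div_mul_eq_mul_div, ← sum_div, sum_Icc_choose_mul_bernstein]
  field_simp

/-- Univariate Bernstein representation over an interval `[d̲, d̄]` with `d̲ ≠ d̄`. -/
theorem univariate_bernstein_representation (n : ℕ) (a : ℕ → ℝ) (dlo dhi : ℝ)
    (hd : dlo ≠ dhi) (x : ℝ) :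
    ∑ i ∈ Finset.range (n + 1), a i * x ^ i
      = ∑ k ∈ Finset.range (n + 1),
          bernCoeff1 n a dlo dhi k * (n.choose k : ℝ) *
            ((x - dlo) / (dhi - dlo)) ^ k * (1 - (x - dlo) / (dhi - dlo)) ^ (n - k) := by
  set t := (x - dlo) / (dhi - dlo)
  have hx : x = dlo + (dhi - dlo) * t := by
    rw [mul_div_cancel₀ _ (sub_ne_zero.2 hd.symm)]; ring
  rw [hx, sum_mul_add_pow_eq_sum_taylor]
  calc _ = ∑ j ∈ range (n + 1), ∑ k ∈ Icc j n,
          (k.choose j : ℝ) / n.choose j * (dhi - dlo) ^ j *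
            (∑ i ∈ Icc j n, (i.choose j : ℝ) * dlo ^ (i - j) * a i) *
              ((n.choose k : ℝ) * t ^ k * (1 - t) ^ (n - k)) := by
        refine sum_congr rfl fun j hj => ?_
        rw [mul_pow, pow_eq_sum_bernstein (mem_range_succ_iff.1 hj) t, mul_sum, mul_sum]
        refine sum_congr rfl fun k _ => ?_
        ring
    _ = _ := by
        rw [sum_range_sum_Icc_comm]
        refine sum_congr rfl fun k _ => ?_
        rw [bernCoeff1, sum_mul, sum_mul, sum_mul]
        refine sum_congr rfl fun j _ => ?_
        ring
end

section
/- (Univariate range enclosure.) Let n ∈ ℕ, let a_0, …, a_n ∈ ℝ, let p(x) = ∑_{i=0}^{n} a_i x^i, and let d̲ < d̄ be reals. Define b_k = ∑_{j=0}^{k} ((k.choose j : ℝ)/(n.choose j)) · (d̄ − d̲)^j · ∑_{i=j}^{n} ((i.choose j : ℝ)) · d̲^(i−j) · a_i for 0 ≤ k ≤ n. Then for every x ∈ [d̲, d̄], (min_{0 ≤ k ≤ n} b_k) ≤ p(x) ≤ (max_{0 ≤ k ≤ n} b_k). -/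
/-!
Put `x = d̲ + t (d̄ - d̲)` with `t ∈ [0, 1]`. Expanding `p(d̲ + y)` in powers of `y` and
substituting `y = t (d̄ - d̲)` writes `p(x)` as a polynomial in `t` of degree `≤ n`. Its coefficients
in the Bernstein basis of degree `n` are exactly the `b_k`, because
`∑_k C(k, j) B_{k,n}(t) = C(n, j) t^j`. The Bernstein basis polynomials are nonnegative on
`[0, 1]` and sum to `1`, so `p(x)` is a convex combination of the `b_k`.
-/

open Finset Polynomial

namespace bernsteinPolynomial

variable (R : Type*) [CommRing R]

theorem choose_smul_add (j m i : ℕ) (hi : i ≤ m) :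
    (j + i).choose j • bernsteinPolynomial R (j + m) (j + i) =
      (j + m).choose j • (X ^ j * bernsteinPolynomial R m i) := by
  have hchoose : ((j + m).choose (j + i) * (j + i).choose j : R[X]) =
      (j + m).choose j * m.choose i := by
    have := Nat.choose_mul (n := j + m) (k := j + i) (s := j) (by omega)
    simp only [Nat.add_sub_cancel_left] at this
    rw [← Nat.cast_mul, ← Nat.cast_mul, this]
  simp only [bernsteinPolynomial, nsmul_eq_mul, pow_add, show j + m - (j + i) = m - i by omega]
  linear_combination (X ^ j * X ^ i * (1 - X) ^ (m - i) : R[X]) * hchoose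

theorem sum_choose_smul (n j : ℕ) :
    ∑ ν ∈ range (n + 1), ν.choose j • bernsteinPolynomial R n ν = n.choose j • X ^ j := by
  rcases lt_or_ge n j with hnj | hjn
  · rw [Nat.choose_eq_zero_of_lt hnj, zero_smul]
    exact sum_eq_zero fun ν hν => by
      rw [Nat.choose_eq_zero_of_lt (by simp at hν; omega), zero_smul]
  obtain ⟨m, rfl⟩ := Nat.exists_eq_add_of_le hjn
  rw [add_assoc, sum_range_add, sum_eq_zero fun ν hν => by
      rw [Nat.choose_eq_zero_of_lt (by simpa using hν), zero_smul], zero_add,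
    sum_congr rfl fun i hi => choose_smul_add R j m i (by simp at hi; omega),
    ← smul_sum, ← mul_sum, sum, mul_one]

end bernsteinPolynomial

section PowerToBernstein

variable {K : Type*} [Field K] [CharZero K]

noncomputable def bernsteinCoeffs (n : ℕ) (c : ℕ → K) (k : ℕ) : K :=
  ∑ j ∈ range (k + 1), (k.choose j / n.choose j : K) * c j

theorem sum_smul_X_pow_eq_sum_bernsteinCoeffs_smul (n : ℕ) (c : ℕ → K) :
    ∑ j ∈ range (n + 1), c j • (X : K[X]) ^ j =
      ∑ k ∈ range (n + 1), bernsteinCoeffs n c k • bernsteinPolynomial K n k := by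
  have hextend : ∀ k ∈ range (n + 1), bernsteinCoeffs n c k =
      ∑ j ∈ range (n + 1), (k.choose j / n.choose j : K) * c j := fun k hk =>
    sum_subset (range_subset_range.2 (by simpa using hk)) fun j _ hj => by
      rw [Nat.choose_eq_zero_of_lt (by simpa using hj)]; simp
  calc ∑ j ∈ range (n + 1), c j • (X : K[X]) ^ j
      = ∑ j ∈ range (n + 1), (c j / n.choose j) • n.choose j • (X : K[X]) ^ j := by
        refine sum_congr rfl fun j hj => ?_
        have : (n.choose j : K) ≠ 0 := by
          exact_mod_cast (Nat.choose_pos (by simpa [Nat.lt_succ_iff] using hj)).ne'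
        rw [← Nat.cast_smul_eq_nsmul K, smul_smul, div_mul_cancel₀ _ this]
    _ = ∑ j ∈ range (n + 1), (c j / n.choose j) •
          ∑ k ∈ range (n + 1), k.choose j • bernsteinPolynomial K n k := by
        simp_rw [bernsteinPolynomial.sum_choose_smul]
    _ = ∑ k ∈ range (n + 1),
          (∑ j ∈ range (n + 1), (k.choose j / n.choose j : K) * c j) • bernsteinPolynomial K n k := by
        simp_rw [smul_sum, sum_smul]
        rw [sum_comm]
        refine sum_congr rfl fun k _ => sum_congr rfl fun j _ => ?_
        rw [← Nat.cast_smul_eq_nsmul K, smul_smul, div_mul_comm]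
    _ = ∑ k ∈ range (n + 1), bernsteinCoeffs n c k • bernsteinPolynomial K n k :=
        sum_congr rfl fun k hk => by rw [hextend k hk]

end PowerToBernstein

section TaylorShift

variable {R : Type*} [CommSemiring R]

def taylorCoeff (n : ℕ) (a : ℕ → R) (x : R) (j : ℕ) : R :=
  ∑ i ∈ Icc j n, i.choose j * x ^ (i - j) * a i

theorem sum_mul_add_pow_eq_sum_taylorCoeff_mul_pow (n : ℕ) (a : ℕ → R) (x y : R) :
    ∑ i ∈ range (n + 1), a i * (x + y) ^ i =
      ∑ j ∈ range (n + 1), taylorCoeff n a x j * y ^ j := by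
  simp_rw [taylorCoeff, add_comm x y, add_pow, mul_sum, sum_mul]
  refine (sum_comm' fun i j => ?_).trans <|
    sum_congr rfl fun j _ => sum_congr rfl fun i _ => by ring
  simp only [mem_range, mem_Icc]
  omega

end TaylorShift

theorem sum_mul_pow_eq_sum_bernCoeff1_mul_eval (n : ℕ) (a : ℕ → ℝ) (dlo dhi t : ℝ) :
    ∑ i ∈ range (n + 1), a i * (dlo + t * (dhi - dlo)) ^ i =
      ∑ k ∈ range (n + 1), bernCoeff1 n a dlo dhi k * (bernsteinPolynomial ℝ n k).eval t := by
  have hcoeff : bernCoeff1 n a dlo dhi =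
      bernsteinCoeffs n fun j => (dhi - dlo) ^ j * taylorCoeff n a dlo j :=
    funext fun k => sum_congr rfl fun j _ => mul_assoc _ _ _
  have hbasis := congrArg (eval t) (sum_smul_X_pow_eq_sum_bernsteinCoeffs_smul n fun j =>
      (dhi - dlo) ^ j * taylorCoeff n a dlo j)
  simp only [eval_finsetSum, eval_smul, eval_pow, eval_X, smul_eq_mul] at hbasis
  rw [sum_mul_add_pow_eq_sum_taylorCoeff_mul_pow, hcoeff, ← hbasis]
  exact sum_congr rfl fun j _ => by rw [mul_pow]; ring

theorem univariate_bernstein_range_enclosure_general (n : ℕ) (a : ℕ → ℝ) (dlo dhi : ℝ)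
    (x : ℝ) (hx : dlo ≤ x ∧ x ≤ dhi) :
    (Finset.range (n + 1)).inf' Finset.nonempty_range_add_one (bernCoeff1 n a dlo dhi)
        ≤ ∑ i ∈ Finset.range (n + 1), a i * x ^ i ∧
    ∑ i ∈ Finset.range (n + 1), a i * x ^ i
        ≤ (Finset.range (n + 1)).sup' Finset.nonempty_range_add_one (bernCoeff1 n a dlo dhi) := by
  obtain ⟨t, ⟨ht₀, ht₁⟩, rfl⟩ : x ∈ (fun t : ℝ => dlo + t • (dhi - dlo)) '' Set.Icc 0 1 := by
    rwa [← segment_eq_image', segment_eq_Icc (hx.1.trans hx.2)]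
  set w : ℕ → ℝ := fun k => (bernsteinPolynomial ℝ n k).eval t
  have hw₀ : ∀ k ∈ range (n + 1), 0 ≤ w k := fun _ _ => bernstein_nonneg (x := ⟨t, ht₀, ht₁⟩)
  have hw₁ : ∑ k ∈ range (n + 1), w k = 1 := by
    simp only [w, ← eval_finsetSum, bernsteinPolynomial.sum, eval_one]
  have hp : ∑ i ∈ range (n + 1), a i * (dlo + t • (dhi - dlo)) ^ i =
      (range (n + 1)).centerMass w (bernCoeff1 n a dlo dhi) := by
    rw [centerMass_eq_of_sum_1 _ _ hw₁, smul_eq_mul, sum_mul_pow_eq_sum_bernCoeff1_mul_eval]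
    simp only [w, smul_eq_mul, mul_comm]
  rw [hp]
  exact ⟨inf_le_centerMass hw₀ (by simp [hw₁]), centerMass_le_sup hw₀ (by simp [hw₁])⟩

/-- Univariate range enclosure: on `[d̲, d̄]`, the polynomial is bounded between the minimum
and maximum of its Bernstein coefficients. -/
theorem univariate_bernstein_range_enclosure (n : ℕ) (a : ℕ → ℝ) (dlo dhi : ℝ)
    (hd : dlo < dhi) (x : ℝ) (hx : dlo ≤ x ∧ x ≤ dhi) :
    (Finset.range (n + 1)).inf' Finset.nonempty_range_add_one (bernCoeff1 n a dlo dhi)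
        ≤ ∑ i ∈ Finset.range (n + 1), a i * x ^ i ∧
    ∑ i ∈ Finset.range (n + 1), a i * x ^ i
        ≤ (Finset.range (n + 1)).sup' Finset.nonempty_range_add_one (bernCoeff1 n a dlo dhi) :=
  univariate_bernstein_range_enclosure_general n a dlo dhi x hx
end
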